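/- Fix τ ∈ (0,1) and integers p ≥ 0 and r with |r| ≤ p and r ≡ p (mod 2). Then there exists a constant C > 0 such that for all integers k ≥ max(r,1): |A_τ(p, k−r, k) − τ^{(p+r)/2}·binom(p, (p+r)/2)·k^{(p+r)/2}| ≤ C·k^{(p+r)/2 − 1}. -/

import Mathlib

open Finset

/-- `1/n!` for an integer `n`, with the convention that `1/n! = 0` for negative `n`. -/
noncomputable def invfac (n : ℤ) : ℝ := if 0 ≤ n then ((n.toNat).factorial : ℝ)⁻¹ else 0

/-- Binomial coefficient `binom(n, m)` for `n : ℕ`, `m : ℤ`, zero for `m < 0` or `m > n`. -/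
noncomputable def zbinom (n : ℕ) (m : ℤ) : ℝ :=
  if 0 ≤ m ∧ m ≤ (n : ℤ) then (n.choose m.toNat : ℝ) else 0

/-- The Hermite expansion coefficients `A_τ(p, j, k)`. -/
noncomputable def Aher (τ : ℝ) (p : ℕ) (j : ℤ) (k : ℕ) : ℝ :=
  if 0 ≤ j ∧ |j - (k : ℤ)| ≤ (p : ℤ) ∧ (j - (k : ℤ)) % 2 = (p : ℤ) % 2 then
    τ ^ ((((p : ℤ) + k - j) / 2).toNat) *
      ∑ l ∈ Finset.range (p / 2 + 1),
        (p.factorial : ℝ) * ((2 : ℝ) ^ l * (l.factorial : ℝ))⁻¹ *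
          invfac (((p : ℤ) - k + j) / 2 - l) *
          zbinom k (((p : ℤ) + k - j) / 2 - l)
  else 0

/-!
Write `p = m + q` and `r = m - q`. Then
`A_τ(p, k - r, k) = τ ^ m * Σ_l p! / (2^l l! (q - l)!) * binom(k, m - l)`.
The `l = 0` summand is `binom(p, m)` times the falling factorial `k (k - 1) ⋯ (k - m + 1)`, which
differs from `k ^ m` by at most `binom(m, 2) k ^ (m - 1)`; every other summand is at most
`p! k ^ (m - 1)` because `binom(k, m - l) ≤ k ^ (m - l)`.
-/

open Nat

theorem pow_succ_le_descFactorial_add (k m : ℕ) :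
    k ^ (m + 1) ≤ k.descFactorial (m + 1) + (m + 1).choose 2 * k ^ m := by
  induction m with
  | zero => simp
  | succ m ih =>
    calc k ^ (m + 2) = k * k ^ (m + 1) := _root_.pow_succ' k (m + 1)
      _ ≤ k * (k.descFactorial (m + 1) + (m + 1).choose 2 * k ^ m) := Nat.mul_le_mul_left k ih
      _ = k * k.descFactorial (m + 1) + (m + 1).choose 2 * k ^ (m + 1) := by ring
      _ ≤ (k - (m + 1) + (m + 1)) * k.descFactorial (m + 1) + (m + 1).choose 2 * k ^ (m + 1) := by
        gcongr; omega
      _ ≤ k.descFactorial (m + 2) + (m + 2).choose 2 * k ^ (m + 1) := by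
        rw [add_mul, ← k.descFactorial_succ, Nat.choose_succ_succ' (m + 1), Nat.choose_one_right]
        nlinarith [k.descFactorial_le_pow (m + 1)]

theorem abs_descFactorial_sub_pow_le (k m : ℕ) :
    |(k.descFactorial m : ℝ) - (k : ℝ) ^ m| ≤ m.choose 2 * (k : ℝ) ^ ((m : ℤ) - 1) := by
  cases m with
  | zero => simp
  | succ m =>
    have hle := pow_succ_le_descFactorial_add k m
    have hge := k.descFactorial_le_pow (m + 1)
    rw [Nat.cast_succ, add_sub_cancel_right, zpow_natCast,
      abs_sub_comm, abs_of_nonneg (sub_nonneg.2 (by exact_mod_cast hge)), sub_le_iff_le_add']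
    exact_mod_cast hle

theorem invfac_nonneg (n : ℤ) : 0 ≤ invfac n := by
  unfold invfac; split <;> positivity

theorem invfac_le_one (n : ℤ) : invfac n ≤ 1 := by
  unfold invfac; split
  · exact inv_le_one_of_one_le₀ (by exact_mod_cast (Nat.factorial_pos _))
  · exact zero_le_one

theorem invfac_natCast (n : ℕ) : invfac n = (n ! : ℝ)⁻¹ := by
  simp [invfac]

theorem zbinom_nonneg (n : ℕ) (m : ℤ) : 0 ≤ zbinom n m := by
  unfold zbinom; split <;> positivity

theorem zbinom_natCast (n m : ℕ) : zbinom n m = n.choose m := by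
  unfold zbinom
  split_ifs
  · rw [Int.toNat_natCast]
  · rw [Nat.choose_eq_zero_of_lt (by omega), Nat.cast_zero]

theorem zbinom_of_neg (n : ℕ) {m : ℤ} (hm : m < 0) : zbinom n m = 0 := by
  simp [zbinom, hm.not_ge]

theorem zbinom_le_zpow (n : ℕ) (m : ℤ) : zbinom n m ≤ (n : ℝ) ^ m := by
  rcases lt_or_ge m 0 with hm | hm
  · rw [zbinom_of_neg n hm]
    exact zpow_nonneg (Nat.cast_nonneg n) m
  · lift m to ℕ using hm
    rw [zbinom_natCast, zpow_natCast]
    exact_mod_cast Nat.choose_le_pow n m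

/-- The `l`-th summand of `A_τ(p, j, k) / τ ^ m`, where `m = (p + k - j) / 2` and
`q = (p - k + j) / 2`. -/
noncomputable def hermiteSummand (p : ℕ) (q m : ℤ) (k l : ℕ) : ℝ :=
  p ! * ((2 : ℝ) ^ l * l !)⁻¹ * invfac (q - l) * zbinom k (m - l)

theorem hermiteSummand_zero (m q k : ℕ) :
    hermiteSummand (m + q) q m k 0 = (m + q).choose m * k.descFactorial m := by
  have hq : (q ! : ℝ) ≠ 0 := by positivity
  have hchoose : ((m + q).choose m * q ! * m ! : ℝ) = (m + q)! := by
    rw [add_comm m q]; exact_mod_cast Nat.add_choose_mul_factorial_mul_factorial q m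
  simp only [hermiteSummand, Nat.cast_zero, sub_zero, invfac_natCast, zbinom_natCast, pow_zero,
    Nat.factorial_zero, Nat.cast_one, mul_one, inv_one, Nat.descFactorial_eq_factorial_mul_choose]
  rw [← hchoose]
  field_simp
  push_cast
  ring

theorem abs_hermiteSummand_le (p : ℕ) (q m : ℤ) {k l : ℕ} (hk : 1 ≤ k) (hl : 1 ≤ l) :
    |hermiteSummand p q m k l| ≤ p ! * (k : ℝ) ^ (m - 1) := by
  have hpow : 1 ≤ (2 : ℝ) ^ l * l ! :=
    one_le_mul_of_one_le_of_one_le (one_le_pow₀ one_le_two) (by exact_mod_cast l.factorial_pos)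
  have hbinom : zbinom k (m - l) ≤ (k : ℝ) ^ (m - 1) :=
    (zbinom_le_zpow k _).trans (zpow_le_zpow_right₀ (by exact_mod_cast hk) (by omega))
  have := invfac_nonneg (q - l)
  have := zbinom_nonneg k (m - l)
  unfold hermiteSummand
  rw [abs_of_nonneg (by positivity)]
  calc (p ! : ℝ) * ((2 : ℝ) ^ l * l !)⁻¹ * invfac (q - l) * zbinom k (m - l)
      ≤ p ! * 1 * 1 * (k : ℝ) ^ (m - 1) := by
        gcongr
        · exact inv_le_one_of_one_le₀ hpow
        · exact invfac_le_one _
    _ = p ! * (k : ℝ) ^ (m - 1) := by ring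

theorem abs_sum_hermiteSummand_sub_le (m q : ℕ) {k : ℕ} (hk : 1 ≤ k) :
    |∑ l ∈ range ((m + q) / 2 + 1), hermiteSummand (m + q) q m k l -
        (m + q).choose m * (k : ℝ) ^ m| ≤
      ((m + q).choose m * m.choose 2 + ((m + q) / 2 : ℕ) * (m + q)!) *
        (k : ℝ) ^ ((m : ℤ) - 1) := by
  set n := (m + q) / 2
  have htail : |∑ l ∈ range n, hermiteSummand (m + q) q m k (l + 1)| ≤
      n * ((m + q)! * (k : ℝ) ^ ((m : ℤ) - 1)) := by
    refine (abs_sum_le_sum_abs _ _).trans ?_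
    refine (sum_le_sum fun l (_ : l ∈ range n) =>
      abs_hermiteSummand_le (m + q) q m hk l.succ_pos).trans_eq ?_
    simp
  have hhead : |((m + q).choose m : ℝ) * (k.descFactorial m - (k : ℝ) ^ m)| ≤
      (m + q).choose m * (m.choose 2 * (k : ℝ) ^ ((m : ℤ) - 1)) := by
    rw [abs_mul, Nat.abs_cast]
    exact mul_le_mul_of_nonneg_left (abs_descFactorial_sub_pow_le k m) (Nat.cast_nonneg _)
  rw [sum_range_succ', hermiteSummand_zero, add_sub_assoc, ← mul_sub]
  calc _ ≤ _ := abs_add_le _ _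
    _ ≤ _ := add_le_add htail hhead
    _ = _ := by ring

theorem Aher_eq_mul_sum_hermiteSummand (τ : ℝ) {m q k : ℕ} (h : m ≤ k + q) :
    Aher τ (m + q) ((k : ℤ) - (m - q)) k =
      τ ^ m * ∑ l ∈ range ((m + q) / 2 + 1), hermiteSummand (m + q) q m k l := by
  have hcond : 0 ≤ (k : ℤ) - (m - q) ∧ |(k : ℤ) - (m - q) - k| ≤ ((m + q : ℕ) : ℤ) ∧
      ((k : ℤ) - (m - q) - k) % 2 = ((m + q : ℕ) : ℤ) % 2 := by
    refine ⟨by omega, abs_le.2 ⟨by omega, by omega⟩, by omega⟩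
  rw [Aher, if_pos hcond]
  congr 1
  · congr 1; omega
  · refine sum_congr rfl fun l _ => ?_
    unfold hermiteSummand
    congr 4 <;> omega

theorem Aher_asymptotics_general (τ : ℝ) (hτ0 : 0 < τ)
    (p : ℕ) (r : ℤ) (hr : |r| ≤ (p : ℤ)) (hpar : r % 2 = (p : ℤ) % 2) :
    ∃ C > 0, ∀ k : ℕ, max r 1 ≤ (k : ℤ) →
      |Aher τ p ((k : ℤ) - r) k -
          τ ^ ((((p : ℤ) + r) / 2).toNat) * zbinom p (((p : ℤ) + r) / 2) *
            (k : ℝ) ^ (((p : ℤ) + r) / 2)|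
        ≤ C * (k : ℝ) ^ ((((p : ℤ) + r) / 2) - 1) := by
  obtain ⟨m, q, rfl, rfl⟩ : ∃ m q : ℕ, p = m + q ∧ r = m - q := by
    obtain ⟨hr₁, hr₂⟩ := abs_le.1 hr
    exact ⟨((p + r) / 2).toNat, ((p - r) / 2).toNat, by omega, by omega⟩
  have hm : (((m + q : ℕ) : ℤ) + (m - q)) / 2 = m := by omega
  set C : ℝ := (m + q).choose m * m.choose 2 + ((m + q) / 2 : ℕ) * (m + q)!
  refine ⟨τ ^ m * (C + 1), by positivity, fun k hk => ?_⟩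
  rw [Aher_eq_mul_sum_hermiteSummand τ (by omega), hm, Int.toNat_natCast, zbinom_natCast,
    zpow_natCast, mul_assoc, ← mul_sub, abs_mul, abs_of_pos (by positivity), mul_assoc]
  gcongr
  calc _ ≤ C * (k : ℝ) ^ ((m : ℤ) - 1) := abs_sum_hermiteSummand_sub_le m q (by omega)
    _ ≤ (C + 1) * (k : ℝ) ^ ((m : ℤ) - 1) := by gcongr; linarith

/-- Asymptotics of the Hermite expansion coefficients: for fixed `τ ∈ (0,1)`,
`p ≥ 0` and `|r| ≤ p` with `r ≡ p (mod 2)`, there is `C > 0` such that for all `k ≥ max(r,1)`,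
`|A_τ(p, k−r, k) − τ^{(p+r)/2} binom(p, (p+r)/2) k^{(p+r)/2}| ≤ C k^{(p+r)/2 − 1}`. -/
theorem Aher_asymptotics (τ : ℝ) (hτ0 : 0 < τ) (hτ1 : τ < 1)
    (p : ℕ) (r : ℤ) (hr : |r| ≤ (p : ℤ)) (hpar : r % 2 = (p : ℤ) % 2) :
    ∃ C > 0, ∀ k : ℕ, max r 1 ≤ (k : ℤ) →
      |Aher τ p ((k : ℤ) - r) k -
          τ ^ ((((p : ℤ) + r) / 2).toNat) * zbinom p (((p : ℤ) + r) / 2) *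
            (k : ℝ) ^ (((p : ℤ) + r) / 2)|
        ≤ C * (k : ℝ) ^ ((((p : ℤ) + r) / 2) - 1) :=
  Aher_asymptotics_general τ hτ0 p r hr hpar
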